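/- For every nonzero e ∈ ℂ there is an isomorphism of local ℂ-algebras ℂ[[t,u,v]]/(uv, tv, tu − e·v²) ≅ ℂ[[x,y,z]]/(3x²+yz, xz, xy). The right-hand side is the Milnor algebra Q(x³+xyz) of the non-isolated singularity x³ + xyz; the left-hand side is the local ring of the modular stratum of the symmetric exceptional singularity T_{6,6,3}. -/

import Mathlib

/-!
The substitution `t ↦ -(e/3)·y, u ↦ z, v ↦ x` is an automorphism of `ℂ[[x,y,z]]` carrying the
generators `uv, tv, tu - e·v²` to `xz, -(e/3)·xy, -(e/3)·(3x² + yz)`, i.e. to unit multiples of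
the generators of the Jacobian ideal of `x³ + xyz`; so it maps the one ideal onto the other.
-/

open MvPowerSeries

namespace MvPowerSeries

variable {σ R : Type*} [CommRing R]

theorem rescale_X (a : σ → R) (i : σ) : rescale a (X i : MvPowerSeries σ R) = C (a i) * X i := by
  rw [rescale_eq_subst, subst_X (HasSubst.smul_X a), Pi.smul_apply', smul_eq_C_mul]

noncomputable def rescaleAlgEquiv (a : σ → Rˣ) : MvPowerSeries σ R ≃ₐ[R] MvPowerSeries σ R :=
  AlgEquiv.ofAlgHom (rescaleAlgHom fun i ↦ (a i : R)) (rescaleAlgHom fun i ↦ ((a i)⁻¹ : Rˣ))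
    (by rw [← rescaleAlgHom_mul, ← rescaleAlgHom_one]; congr; ext; simp)
    (by rw [← rescaleAlgHom_mul, ← rescaleAlgHom_one]; congr; ext; simp)

theorem rescaleAlgEquiv_apply (a : σ → Rˣ) (f : MvPowerSeries σ R) :
    rescaleAlgEquiv a f = rescale (fun i ↦ (a i : R)) f :=
  rescaleAlgHom_apply _ f

end MvPowerSeries

section CyclicRescale

variable {R : Type*} [CommRing R]

noncomputable def cyclicRescale (c : Rˣ) : MvPowerSeries (Fin 3) R ≃ₐ[R] MvPowerSeries (Fin 3) R :=
  (renameEquiv R (finRotate 3)).trans (rescaleAlgEquiv ![1, c, 1])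

theorem cyclicRescale_X (c : Rˣ) (i : Fin 3) :
    cyclicRescale c (X i) =
      C ((![1, c, 1] : Fin 3 → Rˣ) (finRotate 3 i) : R) * X (finRotate 3 i) := by
  simp [cyclicRescale, rescaleAlgEquiv_apply, rescale_X]

@[simp]
theorem cyclicRescale_X_zero (c : Rˣ) : cyclicRescale c (X 0) = C (c : R) * X 1 := by
  simp [cyclicRescale_X]

@[simp]
theorem cyclicRescale_X_one (c : Rˣ) :
    cyclicRescale c (X 1) = (X 2 : MvPowerSeries (Fin 3) R) := by
  simp [cyclicRescale_X]

@[simp]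
theorem cyclicRescale_X_two (c : Rˣ) :
    cyclicRescale c (X 2) = (X 0 : MvPowerSeries (Fin 3) R) := by
  simp [cyclicRescale_X]

@[simp]
theorem cyclicRescale_C (c : Rˣ) (r : R) :
    cyclicRescale c (C r) = (C r : MvPowerSeries (Fin 3) R) := by
  rw [c_eq_algebraMap, AlgEquiv.commutes]

theorem map_cyclicRescale_span_modular {c : Rˣ} {e : R} (hc : 3 * (c : R) = -e) :
    (Ideal.span {X 1 * X 2, X 0 * X 2, X 0 * X 1 - (C : R →+* MvPowerSeries (Fin 3) R) e * X 2 ^ 2}).map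
      (cyclicRescale c) =
    Ideal.span {(3 : MvPowerSeries (Fin 3) R) * X 0 ^ 2 + X 1 * X 2, X 0 * X 2, X 0 * X 1} := by
  have hcC : IsUnit (C (c : R) : MvPowerSeries (Fin 3) R) := c.isUnit.map C
  have h12 : cyclicRescale c (X 1 * X 2) = X 0 * X 2 := by simp [mul_comm]
  have h02 : cyclicRescale c (X 0 * X 2) = C (c : R) * (X 0 * X 1) := by
    simp only [map_mul, cyclicRescale_X_zero, cyclicRescale_X_two]; ring
  have h01 : cyclicRescale c (X 0 * X 1 - C e * X 2 ^ 2) =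
      C (c : R) * (3 * X 0 ^ 2 + X 1 * X 2) := by
    have hcC3 : 3 * (C (c : R) : MvPowerSeries (Fin 3) R) = -C e := by
      rw [← map_ofNat C 3, ← map_mul, hc, map_neg]
    simp only [map_sub, map_mul, map_pow, cyclicRescale_C, cyclicRescale_X_zero,
      cyclicRescale_X_one, cyclicRescale_X_two]
    linear_combination -X 0 ^ 2 * hcC3
  rw [Ideal.map_span, Set.image_insert_eq, Set.image_insert_eq, Set.image_singleton]
  simp only [h12, h02, h01, Ideal.span_insert, Ideal.span_singleton_mul_left_unit hcC]
  ac_rfl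

end CyclicRescale

/-- For every nonzero `e ∈ ℂ` the local `ℂ`-algebras `ℂ[[t,u,v]]/(uv, tv, tu - e·v²)`
(the local ring of the modular stratum of the symmetric exceptional singularity
`T_{6,6,3}`) and `ℂ[[x,y,z]]/(3x²+yz, xz, xy)` (the Milnor algebra `Q(x³+xyz)` of the
non-isolated singularity `x³+xyz`) are isomorphic. -/
theorem modularAlgebraT663_iso_milnorAlgebra_x3xyz (e : ℂ) (he : e ≠ 0) :
    Nonempty ((MvPowerSeries (Fin 3) ℂ ⧸
        Ideal.span {X 1 * X 2, X 0 * X 2, X 0 * X 1 - (C : ℂ →+* MvPowerSeries (Fin 3) ℂ) e * X 2 ^ 2}) ≃ₐ[ℂ]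
      (MvPowerSeries (Fin 3) ℂ ⧸
        Ideal.span {(3 : MvPowerSeries (Fin 3) ℂ) * X 0 ^ 2 + X 1 * X 2,
          X 0 * X 2, X 0 * X 1})) := by
  let c : ℂˣ := Units.mk0 (-e / 3) (by simpa using he)
  have hc : 3 * (c : ℂ) = -e := by simp only [c, Units.val_mk0]; ring
  exact ⟨Ideal.quotientEquivAlg _ _ (cyclicRescale c) (map_cyclicRescale_span_modular hc).symm⟩
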